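/- arXiv:2306.04651 — 2 statements merged into one kernel-verified Lean document; each statement's English description precedes it below -/
import Mathlib

section
/- Suppose S(A,b) ≠ ∅. Fix j and define y by y_j = max over i of max(0, 1 + b_i − ∑_t a_{it}) and y_k = 1 for k ≠ j. Then y ∈ S(A,b). Moreover, if a_{it} > 0 for all i, t and a_{ij} + y_j − 1 > 0 for all i, then y is a minimal solution of the system. -/
/-! The sum of row `i` at `y` is `TL (A i j) (y j) + ∑_{k ≠ j} A i k`, so every row is satisfied
once `y j ≥ 1 + b i - ∑_t A i t`; `y j ≤ 1` because any solution forces `b i ≤ ∑_t A i t`.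
For minimality, the row `i` attaining the maximum in `y j` holds with equality, and under the
positivity hypotheses every term of that row is in the strictly increasing branch of `TL`,
so lowering any coordinate of `y` breaks this row. -/

open Finset

noncomputable section

/-- Łukasiewicz t-norm. -/
def TL (a x : ℝ) : ℝ := max (a + x - 1) 0

/-- Solution set of the addition-Łukasiewicz system. -/
def Sset {m n : ℕ} (A : Fin m → Fin n → ℝ) (b : Fin m → ℝ) : Set (Fin n → ℝ) :=
  {x | (∀ j, x j ∈ Set.Icc (0:ℝ) 1) ∧ ∀ i, b i ≤ ∑ j, TL (A i j) (x j)}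

/-- Minimal solution. -/
def IsMinimalSol {m n : ℕ} (A : Fin m → Fin n → ℝ) (b : Fin m → ℝ) (x : Fin n → ℝ) : Prop :=
  x ∈ Sset A b ∧ ∀ y ∈ Sset A b, y ≤ x → y = x

/-- The set F_j(z). -/
def Fset {m n : ℕ} (A : Fin m → Fin n → ℝ) (b : Fin m → ℝ) (j : Fin n) (z : Fin n → ℝ) :
    Set ℝ :=
  {t | t ∈ Set.Icc (0:ℝ) 1 ∧
    ∀ i, b i ≤ TL (A i j) t + ∑ k ∈ Finset.univ.erase j, TL (A i k) (z k)}

/-- Objective Z(x) = max_j x_j. -/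
def Zf {n : ℕ} (x : Fin n → ℝ) : ℝ := ⨆ j, x j

/-- Optimal solution of the minimax problem. -/
def IsOptimal {m n : ℕ} (A : Fin m → Fin n → ℝ) (b : Fin m → ℝ) (x : Fin n → ℝ) : Prop :=
  x ∈ Sset A b ∧ ∀ y ∈ Sset A b, Zf x ≤ Zf y

lemma TL_monotone (a : ℝ) : Monotone (TL a) :=
  fun _ _ h => max_le_max (by linarith) le_rfl

lemma TL_of_pos {a x : ℝ} (h : 0 < a + x - 1) : TL a x = a + x - 1 :=
  max_eq_left h.le

lemma TL_lt_TL {a x y : ℝ} (hy : 0 < a + y - 1) (hxy : x < y) : TL a x < TL a y := by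
  rw [TL_of_pos hy]
  exact max_lt (by linarith) hy

lemma TL_le_left {a x : ℝ} (ha : 0 ≤ a) (hx : x ≤ 1) : TL a x ≤ a :=
  max_le (by linarith) ha

lemma TL_one {a : ℝ} (ha : 0 ≤ a) : TL a 1 = a := by
  simp [TL, ha]

section

variable {m n : ℕ} {A : Fin m → Fin n → ℝ} {b : Fin m → ℝ}

lemma le_sum_row_of_mem_Sset (hA : ∀ i k, 0 ≤ A i k) {x : Fin n → ℝ} (hx : x ∈ Sset A b)
    (i : Fin m) : b i ≤ ∑ t, A i t :=
  (hx.2 i).trans (sum_le_sum fun k _ => TL_le_left (hA i k) (hx.1 k).2)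

lemma sum_TL_eq_of_eq_one_of_ne (hA : ∀ i k, 0 ≤ A i k) {j : Fin n} {y : Fin n → ℝ}
    (hy : ∀ k, k ≠ j → y k = 1) (i : Fin m) :
    ∑ k, TL (A i k) (y k) = TL (A i j) (y j) + ∑ k ∈ univ.erase j, A i k := by
  rw [← add_sum_erase _ _ (mem_univ j)]
  congr 1
  refine sum_congr rfl fun k hk => ?_
  rw [hy k (ne_of_mem_erase hk), TL_one (hA i k)]

lemma mem_Sset_of_eq_one_of_ne (hA : ∀ i k, 0 ≤ A i k) {j : Fin n} {y : Fin n → ℝ}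
    (hy : ∀ k, k ≠ j → y k = 1) (hyj : y j ∈ Set.Icc 0 1)
    (hb : ∀ i, 1 + b i - ∑ t, A i t ≤ y j) : y ∈ Sset A b := by
  refine ⟨fun k => ?_, fun i => ?_⟩
  · by_cases hk : k = j
    · exact hk ▸ hyj
    · rw [hy k hk]
      exact ⟨zero_le_one, le_rfl⟩
  · rw [sum_TL_eq_of_eq_one_of_ne hA hy]
    have hrow := add_sum_erase univ (A i) (mem_univ j)
    have hTL : A i j + y j - 1 ≤ TL (A i j) (y j) := le_max_left _ _
    linarith [hb i]

lemma isMinimalSol_of_tight_row {y : Fin n → ℝ} (hy : y ∈ Sset A b) (i : Fin m)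
    (htight : ∑ k, TL (A i k) (y k) = b i) (hactive : ∀ k, 0 < A i k + y k - 1) :
    IsMinimalSol A b y := by
  refine ⟨hy, fun z hz hzy => ?_⟩
  by_contra hne
  obtain ⟨k, hk⟩ := Function.ne_iff.mp hne
  have hlt : ∑ k, TL (A i k) (z k) < ∑ k, TL (A i k) (y k) :=
    sum_lt_sum (fun k _ => TL_monotone _ (hzy k))
      ⟨k, mem_univ k, TL_lt_TL (hactive k) ((hzy k).lt_of_ne hk)⟩
  linarith [hz.2 i]

end

theorem stmt7_general {m n : ℕ} (hm : 0 < m) (A : Fin m → Fin n → ℝ) (b : Fin m → ℝ)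
    (hA : ∀ i j, A i j ∈ Set.Icc (0:ℝ) 1)
    (hS : (Sset A b).Nonempty) (j : Fin n) (y : Fin n → ℝ)
    (hyj : y j = Finset.univ.sup'
      (Finset.univ_nonempty_iff.mpr (Fin.pos_iff_nonempty.mp hm))
      (fun i => max 0 (1 + b i - ∑ t, A i t)))
    (hyk : ∀ k, k ≠ j → y k = 1) :
    y ∈ Sset A b ∧
      ((∀ i t, 0 < A i t) → (∀ i, 0 < A i j + y j - 1) → IsMinimalSol A b y) := by
  have hA0 : ∀ i k, 0 ≤ A i k := fun i k => (hA i k).1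
  obtain ⟨x, hx⟩ := hS
  have hle_yj : ∀ i, max 0 (1 + b i - ∑ t, A i t) ≤ y j := fun i =>
    hyj ▸ le_sup' (fun i => max 0 (1 + b i - ∑ t, A i t)) (mem_univ i)
  have hyj_mem : y j ∈ Set.Icc 0 1 :=
    ⟨(le_max_left _ _).trans (hle_yj ⟨0, hm⟩), hyj ▸ sup'_le _ _ fun i _ =>
      max_le zero_le_one (by linarith [le_sum_row_of_mem_Sset hA0 hx i])⟩
  have hmem := mem_Sset_of_eq_one_of_ne hA0 hyk hyj_mem fun i => (le_max_right _ _).trans (hle_yj i)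
  refine ⟨hmem, fun hpos hactive_j => ?_⟩
  obtain ⟨i, -, hi⟩ := exists_mem_eq_sup' _ (fun i => max 0 (1 + b i - ∑ t, A i t))
  have hyj_pos : 0 < y j := by linarith [hactive_j i, (hA i j).2]
  have hyj_eq : y j = 1 + b i - ∑ t, A i t := by
    rw [hyj, hi] at hyj_pos ⊢
    exact max_eq_right ((lt_max_iff.mp hyj_pos).resolve_left (lt_irrefl 0)).le
  refine isMinimalSol_of_tight_row hmem i ?_ fun k => ?_
  · rw [sum_TL_eq_of_eq_one_of_ne hA0 hyk, TL_of_pos (hactive_j i)]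
    linarith [add_sum_erase univ (A i) (mem_univ j)]
  · by_cases hk : k = j
    · exact hk ▸ hactive_j i
    · rw [hyk k hk]
      linarith [hpos i k]

theorem stmt7 {m n : ℕ} (hm : 0 < m) (A : Fin m → Fin n → ℝ) (b : Fin m → ℝ)
    (hA : ∀ i j, A i j ∈ Set.Icc (0:ℝ) 1) (hb : ∀ i, 0 < b i)
    (hS : (Sset A b).Nonempty) (j : Fin n) (y : Fin n → ℝ)
    (hyj : y j = Finset.univ.sup'
      (Finset.univ_nonempty_iff.mpr (Fin.pos_iff_nonempty.mp hm))
      (fun i => max 0 (1 + b i - ∑ t, A i t)))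
    (hyk : ∀ k, k ≠ j → y k = 1) :
    y ∈ Sset A b ∧
      ((∀ i t, 0 < A i t) → (∀ i, 0 < A i j + y j - 1) → IsMinimalSol A b y) :=
  stmt7_general hm A b hA hS j y hyj hyk
end
end

section
/- If x ∈ S(A,b) and y is obtained from x by replacing the j-th coordinate by δ_j(x) (keeping all other coordinates), then y ∈ S(A,b) and y ≤ x. -/
/-! Replacing `x j` by `t` keeps `x` in `S(A,b)` exactly when `t ∈ F_j(x)`. That set is closed
(`T_L` is continuous), bounded below by `0` and contains `x j`, so its infimum `δ_j(x)` lies in it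
and is at most `x j`. -/

open Finset

noncomputable section

theorem Finset.sum_update_eq_add_sum_erase {ι α M : Type*} [Fintype ι] [DecidableEq ι]
    [AddCommMonoid M] (g : ι → α → M) (x : ι → α) (j : ι) (t : α) :
    ∑ k, g k (Function.update x j t k) = g j t + ∑ k ∈ univ.erase j, g k (x k) := by
  rw [← add_sum_erase _ _ (mem_univ j), Function.update_self]
  congr 1
  exact sum_congr rfl fun k hk => by rw [Function.update_of_ne (ne_of_mem_erase hk)]

theorem continuous_TL (a : ℝ) : Continuous (TL a) := by
  unfold TL
  fun_prop

section Fset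

variable {m n : ℕ} {A : Fin m → Fin n → ℝ} {b : Fin m → ℝ} {x : Fin n → ℝ}

theorem mem_Fset_iff_update_mem_Sset (hx : ∀ k, x k ∈ Set.Icc (0:ℝ) 1) (j : Fin n) (t : ℝ) :
    t ∈ Fset A b j x ↔ Function.update x j t ∈ Sset A b := by
  simp only [Fset, Sset, Set.mem_ofPred_eq, sum_update_eq_add_sum_erase,
    Function.forall_update_iff x fun _ y => y ∈ Set.Icc (0:ℝ) 1]
  exact and_congr_left' (and_iff_left fun k _ => hx k).symm

theorem self_mem_Fset (hx : x ∈ Sset A b) (j : Fin n) : x j ∈ Fset A b j x := by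
  rw [mem_Fset_iff_update_mem_Sset hx.1, Function.update_eq_self]
  exact hx

theorem bddBelow_Fset (j : Fin n) : BddBelow (Fset A b j x) :=
  ⟨0, fun _ ht => ht.1.1⟩

theorem isClosed_Fset (j : Fin n) : IsClosed (Fset A b j x) := by
  simp only [Fset, Set.ofPred_and, Set.ofPred_mem_eq, Set.ofPred_forall]
  exact isClosed_Icc.inter <| isClosed_iInter fun i =>
    isClosed_le continuous_const ((continuous_TL _).add continuous_const)

theorem csInf_Fset_mem (hx : x ∈ Sset A b) (j : Fin n) : sInf (Fset A b j x) ∈ Fset A b j x :=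
  (isClosed_Fset j).csInf_mem ⟨x j, self_mem_Fset hx j⟩ (bddBelow_Fset j)

end Fset

theorem stmt12_general {m n : ℕ} (A : Fin m → Fin n → ℝ) (b : Fin m → ℝ)
    (x : Fin n → ℝ) (hx : x ∈ Sset A b) (j : Fin n) :
    Function.update x j (sInf (Fset A b j x)) ∈ Sset A b ∧
      Function.update x j (sInf (Fset A b j x)) ≤ x :=
  ⟨(mem_Fset_iff_update_mem_Sset hx.1 j _).1 (csInf_Fset_mem hx j),
    update_le_self_iff.2 (csInf_le (bddBelow_Fset j) (self_mem_Fset hx j))⟩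

theorem stmt12 {m n : ℕ} (A : Fin m → Fin n → ℝ) (b : Fin m → ℝ)
    (hA : ∀ i j, A i j ∈ Set.Icc (0:ℝ) 1) (hb : ∀ i, 0 < b i)
    (x : Fin n → ℝ) (hx : x ∈ Sset A b) (j : Fin n) :
    Function.update x j (sInf (Fset A b j x)) ∈ Sset A b ∧
      Function.update x j (sInf (Fset A b j x)) ≤ x :=
  stmt12_general A b x hx j
end
end
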